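/- In the setting of the decomposition $v = P + \rho N$ with $|N| = 1$ a.e., $N \cdot D_\alpha P = 0$ a.e. for all $\alpha$, if additionally $\rho \geq 0$ a.e. and $DP : DN \geq 0$ a.e. (Frobenius inner product), then $|DP|^2 + |D\rho|^2 \leq |Dv|^2$ a.e. -/

import Mathlib

open MeasureTheory Filter Metric Set
open scoped InnerProductSpace Pointwise Topology

/-!
On the set `T` where `v = P + ρ N` and `|N| = 1` hold exactly, almost every point is a Lebesgue
density point, and at a density point every direction lies in the tangent cone of `T`. Hence
derivatives are determined by the values on `T`: differentiating the decomposition gives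
`Dv = DP + ρ DN + N ⊗ Dρ`, and differentiating `|N|² = 1` gives `N ⟂ D_α N`. Together with
`N ⟂ D_α P` this yields the energy identity
`|Dv|² = |DP|² + 2ρ DP : DN + ρ² |DN|² + |Dρ|²`, whose two middle terms are nonnegative.
-/

section UniqueDiff

variable {E : Type*} [NormedAddCommGroup E] [NormedSpace ℝ E] [MeasurableSpace E] [BorelSpace E]
  [FiniteDimensional ℝ E] (μ : Measure E) [μ.IsAddHaarMeasure]

theorem mem_tangentConeAt_of_tendsto_measure_inter_div {s : Set E} {x : E}
    (h : Tendsto (fun r => μ (s ∩ closedBall x r) / μ (closedBall x r)) (𝓝[>] 0) (𝓝 1))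
    (y : E) : y ∈ tangentConeAt ℝ s x := by
  rw [tangentConeAt_eq_biInter_closure, mem_iInter₂]
  intro U hU
  rw [Metric.mem_closure_iff]
  intro ε hε
  have hmeets : ∀ᶠ r in 𝓝[>] (0 : ℝ), (s ∩ ({x} + r • closedBall y (ε / 2))).Nonempty :=
    Measure.eventually_nonempty_inter_smul_of_density_one μ s x h _ measurableSet_closedBall
      (measure_closedBall_pos μ y (half_pos hε)).ne'
  have hsmall : ∀ᶠ r in 𝓝[>] (0 : ℝ), {0} + r • closedBall y (ε / 2) ⊆ U :=
    nhdsWithin_le_nhds (eventually_singleton_add_smul_subset isBounded_closedBall hU)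
  obtain ⟨r, ⟨z, hzs, hz⟩, hrU, hr⟩ :=
    (hmeets.and (hsmall.and self_mem_nhdsWithin)).exists
  obtain ⟨a, ha, hra⟩ : ∃ a ∈ closedBall y (ε / 2), r • a = -x + z := by
    simpa [mem_smul_set, singleton_add] using hz
  refine ⟨r⁻¹ • r • a, smul_mem_smul (mem_univ _) ⟨hrU ?_, ?_⟩, ?_⟩
  · simpa [singleton_add] using smul_mem_smul_set (a := r) ha
  · simpa [hra] using hzs
  · rw [inv_smul_smul₀ (ne_of_gt hr), dist_comm]
    exact (mem_closedBall.1 ha).trans_lt (half_lt_self hε)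

theorem uniqueDiffWithinAt_of_tendsto_measure_inter_div {s : Set E} {x : E}
    (h : Tendsto (fun r => μ (s ∩ closedBall x r) / μ (closedBall x r)) (𝓝[>] 0) (𝓝 1)) :
    UniqueDiffWithinAt ℝ s x := by
  have hcone : tangentConeAt ℝ s x = univ :=
    eq_univ_of_forall (mem_tangentConeAt_of_tendsto_measure_inter_div μ h)
  constructor
  · simp only [hcone, Submodule.span_univ, Submodule.top_coe, dense_univ]
  · exact mem_closure_of_nonempty_tangentConeAt (𝕜 := ℝ) (hcone ▸ univ_nonempty)

theorem ae_uniqueDiffWithinAt (s : Set E) : ∀ᵐ x ∂μ, x ∈ s → UniqueDiffWithinAt ℝ s x :=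
  ae_imp_of_ae_restrict <| (Besicovitch.ae_tendsto_measure_inter_div μ s).mono fun _ =>
    uniqueDiffWithinAt_of_tendsto_measure_inter_div μ

end UniqueDiff

theorem HasFDerivAt.eq_zero_of_eqOn_const {𝕜 E F : Type*} [NontriviallyNormedField 𝕜]
    [NormedAddCommGroup E] [NormedSpace 𝕜 E] [NormedAddCommGroup F] [NormedSpace 𝕜 F]
    {f : E → F} {L : E →L[𝕜] F} {s : Set E} {x : E} {c : F} (hf : HasFDerivAt f L x)
    (hs : UniqueDiffWithinAt 𝕜 s x) (hx : x ∈ s) (hc : EqOn f (fun _ => c) s) : L = 0 :=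
  hs.eq hf.hasFDerivWithinAt ((hasFDerivWithinAt_const c x s).congr hc (hc hx))

section Energy

variable {F : Type*} [NormedAddCommGroup F] [InnerProductSpace ℝ F]

theorem norm_add_smul_add_smul_sq {a b N : F} (r t : ℝ) (hN : ‖N‖ = 1) (ha : ⟪a, N⟫_ℝ = 0)
    (hb : ⟪b, N⟫_ℝ = 0) :
    ‖a + r • b + t • N‖ ^ 2 = ‖a‖ ^ 2 + 2 * r * ⟪a, b⟫_ℝ + r ^ 2 * ‖b‖ ^ 2 + t ^ 2 := by
  rw [norm_add_sq_real, norm_add_sq_real]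
  simp only [inner_add_left, real_inner_smul_left, real_inner_smul_right, ha, hb, norm_smul, hN,
    Real.norm_eq_abs, mul_pow, sq_abs]
  ring

theorem sum_norm_sq_add_sum_sq_le_sum_norm_add_smul_add_smul_sq {ι : Type*} [Fintype ι]
    {a b : ι → F} {c : ι → ℝ} {N : F} {r : ℝ} (hN : ‖N‖ = 1) (ha : ∀ i, ⟪a i, N⟫_ℝ = 0)
    (hb : ∀ i, ⟪b i, N⟫_ℝ = 0) (hr : 0 ≤ r) (hab : 0 ≤ ∑ i, ⟪a i, b i⟫_ℝ) :
    ∑ i, ‖a i‖ ^ 2 + ∑ i, c i ^ 2 ≤ ∑ i, ‖a i + r • b i + c i • N‖ ^ 2 := by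
  have hcross : 0 ≤ 2 * r * ∑ i, ⟪a i, b i⟫_ℝ := by positivity
  have hquad : 0 ≤ r ^ 2 * ∑ i, ‖b i‖ ^ 2 := by positivity
  simp only [norm_add_smul_add_smul_sq _ _ hN (ha _) (hb _), Finset.sum_add_distrib,
    ← Finset.mul_sum]
  linarith

end Energy

theorem stmt_4_general {n m : ℕ} (S : Set (EuclideanSpace ℝ (Fin n)))
    (v P N : EuclideanSpace ℝ (Fin n) → EuclideanSpace ℝ (Fin m))
    (ρ : EuclideanSpace ℝ (Fin n) → ℝ)
    (Dv DP DN : EuclideanSpace ℝ (Fin n) →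
      (EuclideanSpace ℝ (Fin n) →L[ℝ] EuclideanSpace ℝ (Fin m)))
    (Dρ : EuclideanSpace ℝ (Fin n) → (EuclideanSpace ℝ (Fin n) →L[ℝ] ℝ))
    (hdiff : ∀ᵐ x ∂volume, x ∈ S → HasFDerivAt v (Dv x) x ∧ HasFDerivAt P (DP x) x ∧
      HasFDerivAt N (DN x) x ∧ HasFDerivAt ρ (Dρ x) x)
    (hdecomp : ∀ᵐ x ∂volume, x ∈ S → v x = P x + ρ x • N x)
    (hN : ∀ᵐ x ∂volume, x ∈ S → ‖N x‖ = 1)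
    (horth : ∀ᵐ x ∂volume, x ∈ S → ∀ α : Fin n,
      ⟪N x, DP x (EuclideanSpace.single α 1)⟫_ℝ = 0)
    (hρ : ∀ᵐ x ∂volume, x ∈ S → 0 ≤ ρ x)
    (hcross : ∀ᵐ x ∂volume, x ∈ S →
      0 ≤ ∑ α : Fin n,
        ⟪DP x (EuclideanSpace.single α 1), DN x (EuclideanSpace.single α 1)⟫_ℝ) :
    ∀ᵐ x ∂volume, x ∈ S →
      ∑ α : Fin n, ‖DP x (EuclideanSpace.single α 1)‖ ^ 2 +
        ∑ α : Fin n, (Dρ x (EuclideanSpace.single α 1)) ^ 2 ≤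
      ∑ α : Fin n, ‖Dv x (EuclideanSpace.single α 1)‖ ^ 2 := by
  set T := {y | v y = P y + ρ y • N y ∧ ‖N y‖ = 1}
  filter_upwards [hdiff, hdecomp, hN, horth, hρ, hcross, ae_uniqueDiffWithinAt volume T]
    with x hdiff hdecomp hN horth hρ hcross hT hxS
  obtain ⟨hv, hP, hNd, hρd⟩ := hdiff hxS
  have hxT : x ∈ T := ⟨hdecomp hxS, hN hxS⟩
  have hDv : Dv x = DP x + (ρ x • DN x + (Dρ x).smulRight (N x)) := sub_eq_zero.1 <|
    (hv.sub (hP.add (hρd.smul hNd))).eq_zero_of_eqOn_const (hT hxT) hxT (c := 0)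
      fun y hy => sub_eq_zero.2 hy.1
  have hDN : ∀ w, ⟪DN x w, N x⟫_ℝ = 0 := by
    have h0 := hNd.norm_sq.eq_zero_of_eqOn_const (hT hxT) hxT (c := 1) fun y hy => by
      simp [hy.2]
    intro w
    simpa [real_inner_comm] using congrArg (· w) h0
  have hDv_apply : ∀ w, Dv x w = DP x w + ρ x • DN x w + Dρ x w • N x := by
    simp [hDv, add_assoc]
  simp only [hDv_apply]
  exact sum_norm_sq_add_sum_sq_le_sum_norm_add_smul_add_smul_sq (hN hxS)
    (fun α => by rw [real_inner_comm]; exact horth hxS α) (fun _ => hDN _) (hρ hxS) (hcross hxS)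

/-- If `v = P + ρ N` with `|N| = 1` a.e., `N ⟂ D_α P` a.e., `ρ ≥ 0` a.e., and the
Frobenius product `DP : DN ≥ 0` a.e., then `|DP|² + |Dρ|² ≤ |Dv|²` a.e. -/
theorem stmt_4 {n m : ℕ} (S : Set (EuclideanSpace ℝ (Fin n))) (hS : MeasurableSet S)
    (v P N : EuclideanSpace ℝ (Fin n) → EuclideanSpace ℝ (Fin m))
    (ρ : EuclideanSpace ℝ (Fin n) → ℝ)
    (Dv DP DN : EuclideanSpace ℝ (Fin n) →
      (EuclideanSpace ℝ (Fin n) →L[ℝ] EuclideanSpace ℝ (Fin m)))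
    (Dρ : EuclideanSpace ℝ (Fin n) → (EuclideanSpace ℝ (Fin n) →L[ℝ] ℝ))
    (hdiff : ∀ᵐ x ∂volume, x ∈ S → HasFDerivAt v (Dv x) x ∧ HasFDerivAt P (DP x) x ∧
      HasFDerivAt N (DN x) x ∧ HasFDerivAt ρ (Dρ x) x)
    (hdecomp : ∀ᵐ x ∂volume, x ∈ S → v x = P x + ρ x • N x)
    (hN : ∀ᵐ x ∂volume, x ∈ S → ‖N x‖ = 1)
    (horth : ∀ᵐ x ∂volume, x ∈ S → ∀ α : Fin n,
      ⟪N x, DP x (EuclideanSpace.single α 1)⟫_ℝ = 0)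
    (hρ : ∀ᵐ x ∂volume, x ∈ S → 0 ≤ ρ x)
    (hcross : ∀ᵐ x ∂volume, x ∈ S →
      0 ≤ ∑ α : Fin n,
        ⟪DP x (EuclideanSpace.single α 1), DN x (EuclideanSpace.single α 1)⟫_ℝ) :
    ∀ᵐ x ∂volume, x ∈ S →
      ∑ α : Fin n, ‖DP x (EuclideanSpace.single α 1)‖ ^ 2 +
        ∑ α : Fin n, (Dρ x (EuclideanSpace.single α 1)) ^ 2 ≤
      ∑ α : Fin n, ‖Dv x (EuclideanSpace.single α 1)‖ ^ 2 :=
  stmt_4_general S v P N ρ Dv DP DN Dρ hdiff hdecomp hN horth hρ hcross
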